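/- arXiv:2307.04860 — 2 statements merged into one kernel-verified Lean document; each statement's English description precedes it below -/
import Mathlib

section
/- Let Ω be a topological space and 𝒜 a linear space of continuous real-valued functions on Ω. Suppose there exists a proper, non-negative function p : Ω → [0,∞), bounded on compact sets, such that p = sup_α |a_α| for some family (a_α) in 𝒜. Then for every compact K ⊆ Ω and every C ≥ 1, the set {ω ∈ Ω : a(ω) ≤ C·sup|a|(K) for all a ∈ 𝒜} is compact; in fact it is contained in p⁻¹([0, C·t]) whenever K ⊆ p⁻¹([0,t]). -/
open Filter Topology Set

/-- `A` is a linear space of real-valued functions. -/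
def IsLinSpace {X : Type} (A : Set (X → ℝ)) : Prop :=
  (fun _ => (0 : ℝ)) ∈ A ∧
  ∀ a ∈ A, ∀ b ∈ A, ∀ α β : ℝ, (fun x => α * a x + β * b x) ∈ A

/-- A map is proper if preimages of compact sets are compact. -/
def ProperFn {Ω : Type} [TopologicalSpace Ω] (p : Ω → ℝ) : Prop :=
  ∀ S : Set ℝ, IsCompact S → IsCompact (p ⁻¹' S)

/-!
The hull `{ω | a ω ≤ C · sup_K |a| for all a ∈ 𝒜}` is closed, being an intersection of sublevel
sets of continuous functions. Since `𝒜` is closed under negation, every point `ω` of the hull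
satisfies `|a ω| ≤ C · sup_K |a|`; applied to the family `a_α` with `p = sup_α |a_α|`, this gives
`p ω ≤ C · sup_K p`. So the hull is a closed subset of `p⁻¹ [0, C t]` for any bound `t` of `p` on
`K`, which is compact because `p` is proper.
-/

theorem IsLinSpace.neg_mem {X : Type} {A : Set (X → ℝ)} (hA : IsLinSpace A) {a : X → ℝ}
    (ha : a ∈ A) : -a ∈ A := by
  convert hA.2 a ha a ha (-1) 0 using 1
  ext x
  simp

/-- For `C = 1` this is the `A`-convex hull of `K`. -/
def scaledHull {Ω : Type} (A : Set (Ω → ℝ)) (C : ℝ) (K : Set Ω) : Set Ω :=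
  {ω | ∀ a ∈ A, ((a ω : ℝ) : EReal) ≤ (C : EReal) * ⨆ k ∈ K, ((|a k| : ℝ) : EReal)}

section scaledHull

variable {Ω : Type} {A : Set (Ω → ℝ)} {C : ℝ} {K : Set Ω}

theorem isClosed_scaledHull [TopologicalSpace Ω] (hcont : ∀ a ∈ A, Continuous a) :
    IsClosed (scaledHull A C K) := by
  simp only [scaledHull, ofPred_forall]
  exact isClosed_biInter fun a ha =>
    isClosed_le (continuous_coe_real_ereal.comp (hcont a ha)) continuous_const

theorem le_mul_of_mem_scaledHull (hC : 0 ≤ C) {ω : Ω} (hω : ω ∈ scaledHull A C K)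
    {a : Ω → ℝ} (ha : a ∈ A) {t : ℝ} (hat : ∀ k ∈ K, |a k| ≤ t) : a ω ≤ C * t := by
  have hsup : ⨆ k ∈ K, ((|a k| : ℝ) : EReal) ≤ t :=
    iSup₂_le fun k hk => EReal.coe_le_coe_iff.mpr (hat k hk)
  have : ((a ω : ℝ) : EReal) ≤ ((C * t : ℝ) : EReal) :=
    calc ((a ω : ℝ) : EReal) ≤ (C : EReal) * ⨆ k ∈ K, ((|a k| : ℝ) : EReal) := hω a ha
      _ ≤ (C : EReal) * t := mul_le_mul_of_nonneg_left hsup (EReal.coe_nonneg.mpr hC)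
      _ = ((C * t : ℝ) : EReal) := (EReal.coe_mul C t).symm
  exact EReal.coe_le_coe_iff.mp this

theorem abs_le_mul_of_mem_scaledHull (hA : IsLinSpace A) (hC : 0 ≤ C) {ω : Ω}
    (hω : ω ∈ scaledHull A C K) {a : Ω → ℝ} (ha : a ∈ A) {t : ℝ}
    (hat : ∀ k ∈ K, |a k| ≤ t) : |a ω| ≤ C * t := by
  refine abs_le'.mpr ⟨le_mul_of_mem_scaledHull hC hω ha hat, ?_⟩
  have hneg := le_mul_of_mem_scaledHull hC hω (hA.neg_mem ha) (t := t)
    (by simpa only [Pi.neg_apply, abs_neg] using hat)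
  simpa only [Pi.neg_apply] using hneg

theorem le_mul_of_mem_scaledHull_of_eq_iSup_abs (hA : IsLinSpace A) (hC : 0 ≤ C)
    {ι : Type} {g : ι → Ω → ℝ} (hg : ∀ i, g i ∈ A) {p : Ω → ℝ}
    (hsup : ∀ ω, (p ω : EReal) = ⨆ i, ((|g i ω| : ℝ) : EReal)) {t : ℝ}
    (hpt : ∀ k ∈ K, p k ≤ t) {ω : Ω} (hω : ω ∈ scaledHull A C K) : p ω ≤ C * t := by
  have habs_le_p : ∀ i ω, |g i ω| ≤ p ω := fun i ω =>
    EReal.coe_le_coe_iff.mp ((hsup ω).symm ▸ le_iSup (fun j => ((|g j ω| : ℝ) : EReal)) i)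
  have : (p ω : EReal) ≤ ((C * t : ℝ) : EReal) := by
    rw [hsup ω]
    exact iSup_le fun i => EReal.coe_le_coe_iff.mpr <|
      abs_le_mul_of_mem_scaledHull hA hC hω (hg i) fun k hk => (habs_le_p i k).trans (hpt k hk)
  exact EReal.coe_le_coe_iff.mp this

end scaledHull

/-- If there is a proper non-negative function `p`, bounded on compacta, with
`p = sup_α |a_α|` for a family in `𝒜`, then for every compact `K` and `C ≥ 1`
the set `{ω : a(ω) ≤ C·sup|a|(K) ∀ a ∈ 𝒜}` is compact; in fact it is
contained in `p⁻¹([0, C·t])` whenever `K ⊆ p⁻¹([0,t])`. -/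
theorem stmt10 {Ω : Type} [TopologicalSpace Ω]
    (A : Set (Ω → ℝ)) (hA : IsLinSpace A) (hcont : ∀ a ∈ A, Continuous a)
    (p : Ω → ℝ) (hp0 : ∀ ω, 0 ≤ p ω) (hproper : ProperFn p)
    (hbdd : ∀ K : Set Ω, IsCompact K → BddAbove (p '' K))
    (ι : Type) (g : ι → Ω → ℝ) (hg : ∀ i, g i ∈ A)
    (hsup : ∀ ω, (p ω : EReal) = ⨆ i, ((|g i ω| : ℝ) : EReal)) :
    ∀ K : Set Ω, IsCompact K → ∀ C : ℝ, 1 ≤ C →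
      IsCompact {ω | ∀ a ∈ A,
          ((a ω : ℝ) : EReal) ≤ (C : EReal) * ⨆ k ∈ K, ((|a k| : ℝ) : EReal)} ∧
      ∀ t : ℝ, K ⊆ p ⁻¹' Set.Icc 0 t →
        {ω | ∀ a ∈ A,
            ((a ω : ℝ) : EReal) ≤ (C : EReal) * ⨆ k ∈ K, ((|a k| : ℝ) : EReal)}
          ⊆ p ⁻¹' Set.Icc 0 (C * t) := by
  intro K hK C hC
  have hsub : ∀ t : ℝ, K ⊆ p ⁻¹' Icc 0 t → scaledHull A C K ⊆ p ⁻¹' Icc 0 (C * t) :=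
    fun t hKt ω hω => ⟨hp0 ω, le_mul_of_mem_scaledHull_of_eq_iSup_abs hA (by linarith) hg hsup
      (fun k hk => (hKt hk).2) hω⟩
  obtain ⟨t, ht⟩ := hbdd K hK
  have hKt : K ⊆ p ⁻¹' Icc 0 t := fun k hk => ⟨hp0 k, ht (mem_image_of_mem p hk)⟩
  exact ⟨(hproper _ isCompact_Icc).of_isClosed_subset (isClosed_scaledHull hcont) (hsub t hKt),
    hsub⟩
end

section
/- Let Ω be a topological space and ℱ a convex cone of continuous functions on Ω containing constants and satisfying the maximum principle. Let 𝒢 be the complete lattice cone generated by ℱ. Let K₁, K₂, K₃, K₄ be compact ℱ-convex subsets of Ω with K₁ ⊊ int K₂, K₂ ⊆ int K₃, K₃ ⊆ K₄. Then there exists a non-negative continuous function p ∈ 𝒢 (a pointwise maximum of finitely many normalized elements of ℱ with 0) such that K₁ ⊆ p⁻¹({0}) and K₂ ⊆ K₄ ∩ p⁻¹((-∞,1]) ⊆ K₃. -/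
open Filter Topology Set

/-- A complete lattice cone of `(-∞,∞]`-valued functions: a convex cone
stable under pointwise suprema of arbitrary families. -/
def IsCLC {X : Type} (K : Set (X → EReal)) : Prop :=
  (∀ f ∈ K, ∀ g ∈ K, ∀ α β : ℝ, 0 ≤ α → 0 ≤ β →
    (fun x => (α : EReal) * f x + (β : EReal) * g x) ∈ K) ∧
  ∀ (ι : Type) (F : ι → X → EReal), (∀ i, F i ∈ K) → (fun x => ⨆ i, F i x) ∈ K

/-- The complete lattice cone generated by a family of real-valued functions. -/
def genCLC {X : Type} (A : Set (X → ℝ)) : Set (X → EReal) :=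
  ⋂₀ {K | IsCLC K ∧ ∀ a ∈ A, (fun x => ((a x : ℝ) : EReal)) ∈ K}

/-- `F` is a convex cone of real-valued functions. -/
def IsConvexConeFn {X : Type} (F : Set (X → ℝ)) : Prop :=
  ∀ f ∈ F, ∀ g ∈ F, ∀ α β : ℝ, 0 ≤ α → 0 ≤ β →
    (fun x => α * f x + β * g x) ∈ F

/-- `F` satisfies the maximum principle: non-constant members have strictly
smaller suprema on compacta than on open sets containing them. -/
def MaxPrin {Ω : Type} [TopologicalSpace Ω] (F : Set (Ω → ℝ)) : Prop :=
  ∀ f ∈ F, (∃ x y, f x ≠ f y) →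
    ∀ K U : Set Ω, IsCompact K → IsOpen U → K ⊆ U →
      (⨆ k ∈ K, ((f k : ℝ) : EReal)) < ⨆ u ∈ U, ((f u : ℝ) : EReal)

/-- A set is `F`-convex if it coincides with its closed `F`-convex hull. -/
def FConvexSet {Ω : Type} [TopologicalSpace Ω] (F : Set (Ω → ℝ)) (K : Set Ω) : Prop :=
  K = {ω | ∀ f ∈ F, ((f ω : ℝ) : EReal) ≤ ⨆ k ∈ K, ((f k : ℝ) : EReal)}

/-!
A point outside the `F`-convex set `K₂` is strictly separated from it by a member of `F`,
which after an affine normalisation is `≤ 0` on `K₂` and `> 1` at the point. Finitely many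
such functions cover the compact shell `K₄ \ int K₃`, and `p := max (f₁, …, fₙ, 0)` then
vanishes on `K₂ ⊇ K₁` and exceeds `1` on the shell.
-/

-- For empty `ι` the real supremum is the junk value `0` while the extended one is `⊥`;
-- the `max … 0` makes both sides agree.
lemma EReal.coe_max_ciSup_zero {ι : Type} [Finite ι] (f : ι → ℝ) :
    ((max (⨆ i, f i) 0 : ℝ) : EReal) = ⨆ o : Option ι, o.elim 0 fun i => (f i : EReal) := by
  rw [iSup_option_elim, EReal.coe_strictMono.monotone.map_max, EReal.coe_zero, max_comm]
  rcases isEmpty_or_nonempty ι with hι | hι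
  · simp
  · congr 1
    obtain ⟨j, hj⟩ := exists_eq_ciSup_of_finite (f := f)
    rw [← hj]
    exact le_antisymm (le_iSup (fun i => (f i : EReal)) j)
      (iSup_le fun i => EReal.coe_le_coe_iff.2 (hj ▸ le_ciSup (Finite.bddAbove_range f) i))

section genCLC

variable {X : Type} {A : Set (X → ℝ)}

lemma coe_mem_genCLC {a : X → ℝ} (ha : a ∈ A) : (fun x => ((a x : ℝ) : EReal)) ∈ genCLC A :=
  mem_sInter.2 fun _ hK => hK.2 a ha

lemma iSup_mem_genCLC {ι : Type} {G : ι → X → EReal} (hG : ∀ i, G i ∈ genCLC A) :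
    (fun x => ⨆ i, G i x) ∈ genCLC A :=
  mem_sInter.2 fun K hK => hK.1.2 ι G fun i => mem_sInter.1 (hG i) K hK

lemma max_iSup_zero_mem_genCLC {ι : Type} [Finite ι] {f : ι → X → ℝ} (h0 : (fun _ => 0) ∈ A)
    (hf : ∀ i, f i ∈ A) :
    (fun x => ((max (⨆ i, f i x) 0 : ℝ) : EReal)) ∈ genCLC A := by
  simp only [EReal.coe_max_ciSup_zero]
  refine iSup_mem_genCLC fun o => ?_
  cases o with
  | none => simpa using coe_mem_genCLC h0
  | some i => exact coe_mem_genCLC (hf i)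

end genCLC

lemma continuous_max_iSup_zero {X : Type} [TopologicalSpace X] {ι : Type} [Finite ι]
    {f : ι → X → ℝ} (hf : ∀ i, Continuous (f i)) :
    Continuous fun x => max (⨆ i, f i x) 0 := by
  rcases isEmpty_or_nonempty ι with hι | hι
  · simpa using continuous_const
  · have := Fintype.ofFinite ι
    simp only [← Finset.sup'_univ_eq_ciSup]
    exact (Continuous.finset_sup'_apply Finset.univ_nonempty fun i _ => hf i).max continuous_const

section FConvexSet

variable {Ω : Type} [TopologicalSpace Ω] {F : Set (Ω → ℝ)} {K : Set Ω}

lemma FConvexSet.exists_nonpos_one_lt_of_notMem (hK : FConvexSet F K)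
    (hcone : IsConvexConeFn F) (hconst : ∀ c : ℝ, (fun _ : Ω => c) ∈ F) {x : Ω} (hx : x ∉ K) :
    ∃ g ∈ F, 1 < g x ∧ ∀ k ∈ K, g k ≤ 0 := by
  rw [hK, mem_ofPred_eq] at hx
  push Not at hx
  obtain ⟨f, hf, hlt⟩ := hx
  obtain ⟨a, hKa, hax⟩ := EReal.lt_iff_exists_real_btwn.1 hlt
  have hfa : ∀ k ∈ K, f k ≤ a := fun k hk =>
    EReal.coe_le_coe_iff.1 ((le_biSup (fun k => ((f k : ℝ) : EReal)) hk).trans hKa.le)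
  have hpos : 0 < f x - a := sub_pos.2 (EReal.coe_lt_coe_iff.1 hax)
  -- `c * (f - a)` is `≤ 0` on `K` and equals `2` at `x`
  set c := 2 / (f x - a)
  have hc : 0 < c := div_pos two_pos hpos
  refine ⟨fun y => c * f y + c * (-a), hcone f hf _ (hconst (-a)) c c hc.le hc.le, ?_, ?_⟩
  · have : c * (f x - a) = 2 := div_mul_cancel₀ 2 hpos.ne'
    linarith
  · intro k hk
    nlinarith [hfa k hk]

lemma FConvexSet.exists_finite_separating (hK : FConvexSet F K) (hcone : IsConvexConeFn F)
    (hcont : ∀ f ∈ F, Continuous f) (hconst : ∀ c : ℝ, (fun _ : Ω => c) ∈ F)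
    {C : Set Ω} (hC : IsCompact C) (hCK : Disjoint C K) :
    ∃ (n : ℕ) (f : Fin n → Ω → ℝ), (∀ i, f i ∈ F) ∧ (∀ i, ∀ k ∈ K, f i k ≤ 0) ∧
      ∀ x ∈ C, ∃ i, 1 < f i x := by
  have hsep : ∀ x ∈ C, ∃ g ∈ F, 1 < g x ∧ ∀ k ∈ K, g k ≤ 0 := fun x hx =>
    hK.exists_nonpos_one_lt_of_notMem hcone hconst (hCK.notMem_of_mem_left hx)
  choose! g hgF hg1 hg0 using hsep
  obtain ⟨t, htC, hcover⟩ := hC.elim_nhds_subcover (fun x => g x ⁻¹' Ioi 1)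
    fun x hx => (isOpen_Ioi.preimage (hcont _ (hgF x hx))).mem_nhds (hg1 x hx)
  refine ⟨t.card, fun i => g (t.equivFin.symm i), fun i => hgF _ (htC _ (t.equivFin.symm i).2),
    fun i => hg0 _ (htC _ (t.equivFin.symm i).2), fun x hx => ?_⟩
  obtain ⟨y, hyt, hxy⟩ := mem_iUnion₂.1 (hcover hx)
  exact ⟨t.equivFin ⟨y, hyt⟩, by simpa using hxy⟩

end FConvexSet

theorem stmt13_general {Ω : Type} [TopologicalSpace Ω] (F : Set (Ω → ℝ))
    (hcone : IsConvexConeFn F) (hcont : ∀ f ∈ F, Continuous f)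
    (hconst : ∀ c : ℝ, (fun _ : Ω => c) ∈ F)
    (K₁ K₂ K₃ K₄ : Set Ω)
    (h₄ : IsCompact K₄)
    (hc₂ : FConvexSet F K₂)
    (h₁₂ : K₁ ⊂ interior K₂) (h₂₃ : K₂ ⊆ interior K₃) (h₃₄ : K₃ ⊆ K₄) :
    ∃ p : Ω → ℝ, Continuous p ∧ (∀ ω, 0 ≤ p ω) ∧
      (fun ω => ((p ω : ℝ) : EReal)) ∈ genCLC F ∧
      (∃ (n : ℕ) (f : Fin n → Ω → ℝ), (∀ i, f i ∈ F) ∧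
        ∀ ω, p ω = max (⨆ i : Fin n, f i ω) 0) ∧
      K₁ ⊆ p ⁻¹' {0} ∧
      K₂ ⊆ K₄ ∩ p ⁻¹' Set.Iic 1 ∧
      K₄ ∩ p ⁻¹' Set.Iic 1 ⊆ K₃ := by
  have hshell : Disjoint (K₄ \ interior K₃) K₂ :=
    disjoint_left.2 fun _ hx hx₂ => hx.2 (h₂₃ hx₂)
  obtain ⟨n, f, hfF, hfK₂, hfshell⟩ := hc₂.exists_finite_separating hcone hcont hconst
    (h₄.diff isOpen_interior) hshell
  have hzero : ∀ ω ∈ K₂, max (⨆ i, f i ω) 0 = 0 := fun ω hω =>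
    max_eq_right (Real.iSup_le (fun i => hfK₂ i ω hω) le_rfl)
  refine ⟨fun ω => max (⨆ i, f i ω) 0, continuous_max_iSup_zero fun i => hcont _ (hfF i),
    fun ω => le_max_right _ _, max_iSup_zero_mem_genCLC (hconst 0) hfF, ⟨n, f, hfF, fun ω => rfl⟩,
    fun ω hω => hzero ω (interior_subset (h₁₂.subset hω)), fun ω hω => ?_, ?_⟩
  · exact ⟨h₃₄ (interior_subset (h₂₃ hω)), by simp [hzero ω hω]⟩
  · rintro ω ⟨hω₄, hω₁⟩
    by_contra hω₃
    obtain ⟨i, hi⟩ := hfshell ω ⟨hω₄, fun h => hω₃ (interior_subset h)⟩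
    have : 1 < max (⨆ i, f i ω) 0 :=
      (hi.trans_le (le_ciSup (Finite.bddAbove_range (f · ω)) i)).trans_le (le_max_left _ _)
    exact this.not_ge hω₁

/-- The annulus lemma: given compact `F`-convex sets `K₁ ⊊ int K₂ ⊆ K₂ ⊆ int K₃`,
`K₃ ⊆ K₄`, there is a non-negative continuous `p` in the complete lattice cone
generated by `F` — a pointwise maximum of finitely many elements of `F` with `0` —
vanishing on `K₁` and with `K₂ ⊆ K₄ ∩ p⁻¹((-∞,1]) ⊆ K₃`. -/
theorem stmt13 {Ω : Type} [TopologicalSpace Ω] (F : Set (Ω → ℝ))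
    (hcone : IsConvexConeFn F) (hcont : ∀ f ∈ F, Continuous f)
    (hconst : ∀ c : ℝ, (fun _ : Ω => c) ∈ F) (hmax : MaxPrin F)
    (K₁ K₂ K₃ K₄ : Set Ω)
    (h₁ : IsCompact K₁) (h₂ : IsCompact K₂) (h₃ : IsCompact K₃) (h₄ : IsCompact K₄)
    (hc₁ : FConvexSet F K₁) (hc₂ : FConvexSet F K₂) (hc₃ : FConvexSet F K₃)
    (hc₄ : FConvexSet F K₄)
    (h₁₂ : K₁ ⊂ interior K₂) (h₂₃ : K₂ ⊆ interior K₃) (h₃₄ : K₃ ⊆ K₄) :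
    ∃ p : Ω → ℝ, Continuous p ∧ (∀ ω, 0 ≤ p ω) ∧
      (fun ω => ((p ω : ℝ) : EReal)) ∈ genCLC F ∧
      (∃ (n : ℕ) (f : Fin n → Ω → ℝ), (∀ i, f i ∈ F) ∧
        ∀ ω, p ω = max (⨆ i : Fin n, f i ω) 0) ∧
      K₁ ⊆ p ⁻¹' {0} ∧
      K₂ ⊆ K₄ ∩ p ⁻¹' Set.Iic 1 ∧
      K₄ ∩ p ⁻¹' Set.Iic 1 ⊆ K₃ :=
  stmt13_general F hcone hcont hconst K₁ K₂ K₃ K₄ h₄ hc₂ h₁₂ h₂₃ h₃₄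
end
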